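/- arXiv:2502.12292 — 4 statements merged into one kernel-verified Lean document; each statement's English description precedes it below -/
import Mathlib

section
/- Let G be a finite group acting measurably on a measurable space Θ, let μ be a G-invariant probability measure on Θ, and let T ∈ ℕ. Consider the pushforward of the product measure μ ⊗ (Unif(G))^{⊗T} under the map (θ, g₁, …, g_T) ↦ (θ, g₁·θ, …, g_T·θ) ∈ Θ^{T+1}, where Unif(G) is the uniform probability measure on G. This pushforward measure on Θ^{T+1} is exchangeable: it is invariant under permuting the T+1 coordinates, i.e., for every permutation σ of {0, 1, …, T}, the pushforward under the coordinate permutation induced by σ equals the measure itself. -/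
/-!
Given `g = (g₁, …, g_T)`, the tuple is `(hᵢ • θ)ᵢ` with `h = (1, g₁, …, g_T)` and `θ ∼ μ`.
Permuting it by `σ` gives `(h_{σ i} h_{σ 0}⁻¹ • (h_{σ 0} • θ))ᵢ`. By invariance
`h_{σ 0} • θ ∼ μ`, and `g ↦ (h_{σ (t+1)} h_{σ 0}⁻¹)ₜ` is a bijection of `Gᵀ`, so averaging over
the uniform `g` returns the same mixture. Writing the uniform measure on `Gᵀ` as a finite sum of
Dirac masses turns the mixture into a finite sum of pushforwards of `μ`, which needs no
measurability of the action in the `G` variable.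
-/

open MeasureTheory
open scoped ENNReal

lemma PMF.pi_toMeasure_eq_sum_smul_dirac {ι : Type*} [Fintype ι] {α : ι → Type*}
    [∀ i, Fintype (α i)] [∀ i, MeasurableSpace (α i)] (p : ∀ i, PMF (α i)) :
    Measure.pi (fun i => (p i).toMeasure) =
      Measure.sum fun v : (∀ i, α i) => (∏ i, p i (v i)) • Measure.dirac v := by
  classical
  refine Measure.pi_eq fun s hs => ?_
  have hpi := MeasurableSet.univ_pi hs
  simp only [Measure.sum_apply _ hpi, tsum_fintype, Measure.smul_apply, smul_eq_mul,
    Measure.dirac_apply' _ hpi, toMeasure_apply _ (hs _), Finset.prod_univ_sum,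
    Fintype.piFinset_univ]
  refine Finset.sum_congr rfl fun v _ => ?_
  by_cases hv : v ∈ Set.univ.pi s
  · simp_all [Set.indicator_of_mem, Set.mem_pi]
  · obtain ⟨i, hi⟩ : ∃ i, v i ∉ s i := by simpa [Set.mem_pi] using hv
    rw [Set.indicator_of_notMem hv, mul_zero, eq_comm]
    exact Finset.prod_eq_zero (Finset.mem_univ i) (Set.indicator_of_notMem hi _)

namespace MeasureTheory.Measure

variable {α β γ : Type*} [MeasurableSpace α] [MeasurableSpace β] [MeasurableSpace γ]
  (μ : Measure α) (c : β → ℝ≥0∞)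

lemma prod_sum_smul_dirac [Countable β] [SFinite μ] :
    μ.prod (sum fun b => c b • dirac b) = sum fun b => c b • map (fun a => (a, b)) μ := by
  simp_rw [prod_sum_right, prod_smul_right, prod_dirac]

lemma map_sum_smul_map_prodMk {f : α × β → γ}
    (hf : AEMeasurable f (sum fun b => c b • map (fun a => (a, b)) μ)) :
    map f (sum fun b => c b • map (fun a => (a, b)) μ) =
      sum fun b => c b • map (fun a => f (a, b)) μ := by
  rw [map_sum hf]
  congr 1
  funext b
  rcases eq_or_ne (c b) 0 with hc | hc
  · simp [hc]
  have hfb : AEMeasurable f (map (fun a => (a, b)) μ) :=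
    (aemeasurable_smul_measure_iff hc).mp (hf.mono_measure (le_sum _ b))
  rw [Measure.map_smul, AEMeasurable.map_map_of_aemeasurable hfb
    measurable_prodMk_right.aemeasurable, Function.comp_def]

end MeasureTheory.Measure

section Rebase

variable {G : Type*} [Group G] {n : ℕ}

/-- The action of `σ` on `Gⁿ⁺¹ / G` (diagonal right multiplication), read on the
representatives `Matrix.vecCons 1 v` whose first entry is `1`. -/
def rebasePerm (σ : Equiv.Perm (Fin (n + 1))) (v : Fin n → G) : Fin n → G :=
  fun t => Matrix.vecCons 1 v (σ t.succ) * (Matrix.vecCons 1 v (σ 0))⁻¹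

lemma vecCons_one_rebasePerm (σ : Equiv.Perm (Fin (n + 1))) (v : Fin n → G) (i : Fin (n + 1)) :
    Matrix.vecCons 1 (rebasePerm σ v) i =
      Matrix.vecCons 1 v (σ i) * (Matrix.vecCons 1 v (σ 0))⁻¹ := by
  cases i using Fin.cases <;> simp [rebasePerm]

lemma rebasePerm_inv_rebasePerm (σ : Equiv.Perm (Fin (n + 1))) (v : Fin n → G) :
    rebasePerm σ⁻¹ (rebasePerm σ v) = v := by
  funext t
  simp only [rebasePerm, vecCons_one_rebasePerm, Equiv.Perm.coe_inv, Equiv.apply_symm_apply]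
  group
  simp

def rebasePermEquiv (σ : Equiv.Perm (Fin (n + 1))) : (Fin n → G) ≃ (Fin n → G) where
  toFun := rebasePerm σ
  invFun := rebasePerm σ⁻¹
  left_inv := rebasePerm_inv_rebasePerm σ
  right_inv v := by simpa using rebasePerm_inv_rebasePerm σ⁻¹ v

end Rebase

section Exchangeable

variable {G Θ : Type*} [Group G] [MeasurableSpace Θ] [MulAction G Θ] {n : ℕ}

lemma map_perm_map_smul_vecCons (hsmul : ∀ g : G, Measurable fun θ : Θ => g • θ)
    {μ : Measure Θ} (hinv : ∀ g : G, Measure.map (fun θ => g • θ) μ = μ)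
    (σ : Equiv.Perm (Fin (n + 1))) (v : Fin n → G) :
    Measure.map (fun x : Fin (n + 1) → Θ => fun i => x (σ i))
        (Measure.map (fun θ i => Matrix.vecCons 1 v i • θ) μ) =
      Measure.map (fun θ i => Matrix.vecCons 1 (rebasePerm σ v) i • θ) μ := by
  have hmeas (w : Fin n → G) : Measurable fun θ : Θ => fun i => Matrix.vecCons 1 w i • θ :=
    measurable_pi_lambda _ fun i => hsmul _
  have hcomp : (fun θ i => Matrix.vecCons 1 v (σ i) • θ) =
      (fun θ i => Matrix.vecCons 1 (rebasePerm σ v) i • θ) ∘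
        fun θ : Θ => Matrix.vecCons 1 v (σ 0) • θ := by
    funext θ i
    simp [vecCons_one_rebasePerm, mul_smul]
  rw [Measure.map_map (measurable_pi_lambda _ fun i => measurable_pi_apply _) (hmeas v),
    Function.comp_def, hcomp, ← Measure.map_map (hmeas _) (hsmul _), hinv]

end Exchangeable

/-- Exchangeability of `(X, g₁·X, …, g_T·X)` when `X ∼ μ` is `G`-invariant and the `gᵢ`
are i.i.d. uniform on the finite group `G`, independent of `X`. -/
theorem stmt_2 {G Θ : Type*} [Group G] [Fintype G] [MeasurableSpace G]
    [MeasurableSpace Θ] [MulAction G Θ]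
    (hsmul : ∀ g : G, Measurable fun θ : Θ => g • θ)
    (μ : Measure Θ) [IsProbabilityMeasure μ]
    (hinv : ∀ g : G, Measure.map (fun θ => g • θ) μ = μ)
    (T : ℕ)
    (ν : Measure (Fin (T + 1) → Θ))
    (hν : ν = Measure.map
        (fun p : Θ × (Fin T → G) => fun i : Fin (T + 1) =>
          Fin.cases p.1 (fun t => p.2 t • p.1) i)
        (μ.prod (Measure.pi fun _ : Fin T => (PMF.uniformOfFintype G).toMeasure))) :
    ∀ σ : Equiv.Perm (Fin (T + 1)),
      Measure.map (fun x : Fin (T + 1) → Θ => fun i => x (σ i)) ν = ν := by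
  intro σ
  set c : ℝ≥0∞ := (Fintype.card G : ℝ≥0∞)⁻¹ ^ T
  have hunif : Measure.pi (fun _ : Fin T => (PMF.uniformOfFintype G).toMeasure) =
      Measure.sum fun v => c • Measure.dirac v := by
    simp [PMF.pi_toMeasure_eq_sum_smul_dirac, c]
  rw [hunif, Measure.prod_sum_smul_dirac] at hν
  set f : Θ × (Fin T → G) → (Fin (T + 1) → Θ) :=
    fun p i => Fin.cases p.1 (fun t => p.2 t • p.1) i
  -- `G` carries an arbitrary σ-algebra, so `f` need not be a.e.-measurable; then both sides are `0`.
  by_cases hf : AEMeasurable f (Measure.sum fun v => c • Measure.map (fun θ => (θ, v)) μ)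
  · have hslice (v : Fin T → G) : (fun θ => f (θ, v)) = fun θ i => Matrix.vecCons 1 v i • θ := by
      funext θ i
      cases i using Fin.cases <;> simp [f]
    have hperm : Measurable fun x : Fin (T + 1) → Θ => fun i => x (σ i) :=
      measurable_pi_lambda _ fun i => measurable_pi_apply (σ i)
    rw [hν, Measure.map_sum_smul_map_prodMk _ _ hf, Measure.map_sum hperm.aemeasurable]
    simp_rw [hslice, Measure.map_smul, map_perm_map_smul_vecCons hsmul hinv]
    exact Measure.sum_comp_equiv (rebasePermEquiv σ)
      fun v : Fin T → G => c • Measure.map (fun θ i => Matrix.vecCons 1 v i • θ) μ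
  · rw [hν, Measure.map_of_not_aemeasurable hf, Measure.map_zero]
end

section
/- Let the symmetric group S_n act measurably on a measurable space 𝒳, let X be a random element of 𝒳 whose law is invariant under the action of every element of S_n, let Y be a random element of a measurable space 𝒴 that is independent of X, and let F : 𝒳 × 𝒴 → S_n be measurable and equivariant in its first argument, meaning F(σ·x, y) = σ ∘ F(x, y) for all σ ∈ S_n, x ∈ 𝒳, y ∈ 𝒴. Then F(X, Y) is uniformly distributed on S_n. -/
/-!
Multiplying `F(X, Y)` on the left by `σ` gives `F(σ • X, Y)`, and `(σ • X, Y)` has the same law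
as `(X, Y)` by invariance and independence. So the law of `F(X, Y)` is invariant under left
translations of the finite group `S_n`, and the only such probability measure is the uniform one:
averaging `P(σ F(X, Y) ∈ s)` over `σ` gives `|s| / n!`.
-/

open MeasureTheory ProbabilityTheory

namespace ProbabilityTheory

lemma IndepFun.identDistrib_map_fst {Ω 𝒳 𝒴 : Type*} [MeasurableSpace Ω] [MeasurableSpace 𝒳]
    [MeasurableSpace 𝒴] {P : Measure Ω} [IsFiniteMeasure P] {X : Ω → 𝒳} {Y : Ω → 𝒴}
    (hXY : X ⟂ᵢ[P] Y) (hX : Measurable X) (hY : Measurable Y) {g : 𝒳 → 𝒳} (hg : Measurable g)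
    (hgX : (P.map X).map g = P.map X) :
    IdentDistrib (fun ω ↦ (g (X ω), Y ω)) (fun ω ↦ (X ω, Y ω)) P P :=
  have hgXX : IdentDistrib (g ∘ X) X P P :=
    ⟨(hg.comp hX).aemeasurable, hX.aemeasurable, by rw [← Measure.map_map hg hX, hgX]⟩
  hgXX.prodMk (.refl hY.aemeasurable) (hXY.comp hg measurable_id) hXY

end ProbabilityTheory

lemma Fintype.sum_indicator_one_mul_right {G : Type*} [Group G] [Fintype G] (s : Set G) (h : G) :
    ∑ g : G, s.indicator (1 : G → ENNReal) (g * h) = Nat.card s := by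
  classical
  calc ∑ g : G, s.indicator (1 : G → ENNReal) (g * h) = ∑ g : G, s.indicator 1 g :=
        Equiv.sum_comp (Equiv.mulRight h) (s.indicator 1)
    _ = Nat.card s := by
        rw [Finset.sum_indicator_eq_sum_filter]
        simp [Nat.card_eq_fintype_card, Fintype.card_subtype]

/- The σ-algebra on `G` is arbitrary, so left translations need not be measurable; invariance is
therefore phrased through `Z` rather than as invariance of the law `P.map Z`. -/
theorem MeasureTheory.map_eq_uniformOfFintype_of_identDistrib_mul_left {G Ω : Type*} [Group G]
    [Fintype G] [MeasurableSpace G] [MeasurableSpace Ω] (P : Measure Ω) [IsProbabilityMeasure P]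
    (Z : Ω → G) (hZ : ∀ g : G, IdentDistrib (fun ω ↦ g * Z ω) Z P P) :
    P.map Z = (PMF.uniformOfFintype G).toMeasure := by
  classical
  ext s hs
  have hlaw (g : G) : P.map Z s = ∫⁻ ω, s.indicator 1 (g * Z ω) ∂P := by
    rw [← (hZ g).map_eq, ← lintegral_indicator_one hs,
      lintegral_map' (measurable_one.indicator hs).aemeasurable (hZ g).aemeasurable_fst]
  have hsum : Fintype.card G * P.map Z s = Nat.card s := by
    calc (Fintype.card G : ENNReal) * P.map Z s
        = ∑ g : G, ∫⁻ ω, s.indicator 1 (g * Z ω) ∂P := by simp [← hlaw]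
      _ = ∫⁻ ω, ∑ g : G, s.indicator 1 (g * Z ω) ∂P := by
          refine (lintegral_finsetSum' _ fun g _ ↦ ?_).symm
          exact (measurable_one.indicator hs).comp_aemeasurable (hZ g).aemeasurable_fst
      _ = Nat.card s := by simp [Fintype.sum_indicator_one_mul_right]
  rw [PMF.toMeasure_uniformOfFintype_apply s hs,
    ENNReal.eq_div_iff (by simp) (ENNReal.natCast_ne_top _), hsum, Nat.card_eq_fintype_card]

/-- Theorem 2 core: if the law of `X` is invariant under the symmetric group `S_n` acting on
`𝒳`, `Y` is independent of `X`, and `F` is equivariant in its first argument, then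
`F(X, Y)` is uniformly distributed on `S_n`. -/
theorem stmt_4 {n : ℕ} {𝒳 𝒴 Ω : Type*} [MeasurableSpace 𝒳] [MeasurableSpace 𝒴]
    [MeasurableSpace Ω] [MeasurableSpace (Equiv.Perm (Fin n))]
    [MulAction (Equiv.Perm (Fin n)) 𝒳]
    (hsmul : ∀ σ : Equiv.Perm (Fin n), Measurable fun x : 𝒳 => σ • x)
    (P : Measure Ω) [IsProbabilityMeasure P]
    (X : Ω → 𝒳) (Y : Ω → 𝒴) (hX : Measurable X) (hY : Measurable Y)
    (hindep : ProbabilityTheory.IndepFun X Y P)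
    (hinvX : ∀ σ : Equiv.Perm (Fin n),
      Measure.map (fun x => σ • x) (Measure.map X P) = Measure.map X P)
    (F : 𝒳 × 𝒴 → Equiv.Perm (Fin n)) (hF : Measurable F)
    (hFequiv : ∀ (σ : Equiv.Perm (Fin n)) (x : 𝒳) (y : 𝒴),
      F (σ • x, y) = σ * F (x, y)) :
    Measure.map (fun ω => F (X ω, Y ω)) P
      = (PMF.uniformOfFintype (Equiv.Perm (Fin n))).toMeasure := by
  refine map_eq_uniformOfFintype_of_identDistrib_mul_left P _ fun σ ↦ ?_
  have hpair := hindep.identDistrib_map_fst hX hY (hsmul σ) (hinvX σ)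
  simpa only [Function.comp_def, hFequiv] using hpair.comp hF
end

section
/- Let the product group S_n × S_n act measurably on a measurable space 𝒳, let X be a random element of 𝒳 whose law is invariant under the action of every element of S_n × S_n, and let Y be a random element of a measurable space 𝒴 independent of X. Let F₁, F₂ : 𝒳 × 𝒴 → S_n be measurable maps such that for all (σ, τ) ∈ S_n × S_n, x ∈ 𝒳, y ∈ 𝒴: F₁((σ, τ)·x, y) = σ ∘ F₁(x, y) and F₂((σ, τ)·x, y) = τ ∘ F₂(x, y). Then F₁(X, Y) and F₂(X, Y) are independent, and each is uniformly distributed on S_n. -/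
/-!
Translating the pair `(F₁(X, Y), F₂(X, Y))` by `(σ, τ) ∈ S_n × S_n` is the same as replacing
`X` by `(σ, τ) • X`, which by invariance and independence leaves the joint law of `(X, Y)`
unchanged. So the law of the pair is a left-invariant probability measure on the finite group
`S_n × S_n`, hence uniform, i.e. the product of two uniform laws on `S_n`.
-/

open MeasureTheory ProbabilityTheory
open scoped ENNReal

namespace PMF

section Group

variable {G : Type*} [Group G] [Fintype G] [MeasurableSpace G]

theorem sum_inv_card_mul_indicator_mul_right {s : Set G} (hs : MeasurableSet s) (z : G) :
    ∑ g : G, (Fintype.card G : ℝ≥0∞)⁻¹ * s.indicator 1 (g * z)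
      = (uniformOfFintype G).toMeasure s := by
  rw [toMeasure_apply _ hs, tsum_fintype]
  refine Fintype.sum_equiv (Equiv.mulRight z) _ _ fun g => ?_
  by_cases h : g * z ∈ s <;> simp [h, uniformOfFintype_apply]

/-- The σ-algebra on `G` is arbitrary, so left translation is only assumed measurable along `Z`. -/
theorem map_eq_uniformOfFintype_of_map_mul_left_eq {Ω : Type*} [MeasurableSpace Ω]
    {P : Measure Ω} [IsProbabilityMeasure P] {Z : Ω → G}
    (hZ : ∀ g, Measurable fun ω => g * Z ω)
    (hinv : ∀ g, P.map (fun ω => g * Z ω) = P.map Z) :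
    P.map Z = (uniformOfFintype G).toMeasure := by
  ext s hs
  have hcard : (Fintype.card G : ℝ≥0∞) ≠ 0 := by simp
  have h1s : Measurable (s.indicator (1 : G → ℝ≥0∞)) := measurable_one.indicator hs
  calc P.map Z s
      = ∑ g : G, (Fintype.card G : ℝ≥0∞)⁻¹ * P.map Z s := by
        rw [← Finset.mul_sum, Finset.sum_const, Finset.card_univ, nsmul_eq_mul, ← mul_assoc,
          ENNReal.inv_mul_cancel hcard (by simp), one_mul]
    _ = ∑ g : G, (Fintype.card G : ℝ≥0∞)⁻¹ *
          ∫⁻ ω, s.indicator 1 (g * Z ω) ∂P := by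
        refine Finset.sum_congr rfl fun g _ => ?_
        rw [← hinv g, ← lintegral_indicator_one hs, lintegral_map h1s (hZ g)]
    _ = ∫⁻ ω, ∑ g : G,
          (Fintype.card G : ℝ≥0∞)⁻¹ * s.indicator 1 (g * Z ω) ∂P := by
        rw [lintegral_finsetSum]
        · exact Finset.sum_congr rfl fun g _ => (lintegral_const_mul _ (h1s.comp (hZ g))).symm
        · exact fun g _ => (h1s.comp (hZ g)).const_mul _
    _ = (uniformOfFintype G).toMeasure s := by
        simp_rw [sum_inv_card_mul_indicator_mul_right hs, lintegral_const, measure_univ, mul_one]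

end Group

theorem toMeasure_uniformOfFintype_prod {α β : Type*} [Fintype α] [Nonempty α]
    [Fintype β] [Nonempty β] [MeasurableSpace α] [MeasurableSpace β] :
    (uniformOfFintype (α × β)).toMeasure
      = (uniformOfFintype α).toMeasure.prod (uniformOfFintype β).toMeasure := by
  classical
  refine (Measure.prod_eq fun s t hs ht => ?_).symm
  rw [toMeasure_uniformOfFintype_apply _ (hs.prod ht), toMeasure_uniformOfFintype_apply _ hs,
    toMeasure_uniformOfFintype_apply _ ht, Fintype.card_congr (Equiv.Set.prod s t)]
  simp only [Fintype.card_prod, Nat.cast_mul, div_eq_mul_inv]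
  rw [ENNReal.mul_inv (by simp) (by simp), mul_mul_mul_comm]

end PMF

theorem ProbabilityTheory.IndepFun.map_prodMk_comp_left {Ω α β : Type*} [MeasurableSpace Ω]
    [MeasurableSpace α] [MeasurableSpace β] {P : Measure Ω} [IsFiniteMeasure P]
    {X : Ω → α} {Y : Ω → β} {f : α → α} (hXY : IndepFun X Y P)
    (hX : Measurable X) (hY : Measurable Y) (hf : Measurable f)
    (hfX : (P.map X).map f = P.map X) :
    P.map (fun ω => (f (X ω), Y ω)) = P.map (fun ω => (X ω, Y ω)) := by
  have hfXY : IndepFun (f ∘ X) Y P := hXY.comp hf measurable_id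
  rw [show (fun ω => (f (X ω), Y ω)) = fun ω => ((f ∘ X) ω, Y ω) from rfl,
    (indepFun_iff_map_prod_eq_prod_map_map (hf.comp hX).aemeasurable hY.aemeasurable).mp hfXY,
    (indepFun_iff_map_prod_eq_prod_map_map hX.aemeasurable hY.aemeasurable).mp hXY,
    ← Measure.map_map hf hX, hfX]

/-- Theorem 3: two matching statistics that are equivariant respectively to the two factors
of an `S_n × S_n` action on `𝒳`, applied to `(X, Y)` with `X` having `S_n × S_n`-invariant
law and `Y` independent of `X`, are independent and each uniformly distributed on `S_n`. -/
theorem stmt_6 {n : ℕ} {𝒳 𝒴 Ω : Type*} [MeasurableSpace 𝒳] [MeasurableSpace 𝒴]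
    [MeasurableSpace Ω] [MeasurableSpace (Equiv.Perm (Fin n))]
    [MulAction (Equiv.Perm (Fin n) × Equiv.Perm (Fin n)) 𝒳]
    (hsmul : ∀ g : Equiv.Perm (Fin n) × Equiv.Perm (Fin n),
      Measurable fun x : 𝒳 => g • x)
    (P : Measure Ω) [IsProbabilityMeasure P]
    (X : Ω → 𝒳) (Y : Ω → 𝒴) (hX : Measurable X) (hY : Measurable Y)
    (hindep : ProbabilityTheory.IndepFun X Y P)
    (hinvX : ∀ g : Equiv.Perm (Fin n) × Equiv.Perm (Fin n),
      Measure.map (fun x => g • x) (Measure.map X P) = Measure.map X P)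
    (F₁ F₂ : 𝒳 × 𝒴 → Equiv.Perm (Fin n)) (hF₁ : Measurable F₁) (hF₂ : Measurable F₂)
    (hF₁equiv : ∀ (σ τ : Equiv.Perm (Fin n)) (x : 𝒳) (y : 𝒴),
      F₁ ((σ, τ) • x, y) = σ * F₁ (x, y))
    (hF₂equiv : ∀ (σ τ : Equiv.Perm (Fin n)) (x : 𝒳) (y : 𝒴),
      F₂ ((σ, τ) • x, y) = τ * F₂ (x, y)) :
    ProbabilityTheory.IndepFun (fun ω => F₁ (X ω, Y ω)) (fun ω => F₂ (X ω, Y ω)) P ∧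
      Measure.map (fun ω => F₁ (X ω, Y ω)) P
        = (PMF.uniformOfFintype (Equiv.Perm (Fin n))).toMeasure ∧
      Measure.map (fun ω => F₂ (X ω, Y ω)) P
        = (PMF.uniformOfFintype (Equiv.Perm (Fin n))).toMeasure := by
  set u := (PMF.uniformOfFintype (Equiv.Perm (Fin n))).toMeasure
  set G₁ := fun ω => F₁ (X ω, Y ω)
  set G₂ := fun ω => F₂ (X ω, Y ω)
  have hXY : Measurable fun ω => (X ω, Y ω) := hX.prodMk hY
  have hG₁ : Measurable G₁ := hF₁.comp hXY
  have hG₂ : Measurable G₂ := hF₂.comp hXY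
  have hmove : ∀ g, Measurable fun ω => (g • X ω, Y ω) := fun g =>
    ((hsmul g).comp hX).prodMk hY
  have htranslate : ∀ g, (fun ω => g * (G₁ ω, G₂ ω))
      = (fun p => (F₁ p, F₂ p)) ∘ fun ω => (g • X ω, Y ω) := by
    rintro ⟨σ, τ⟩
    funext ω
    simp [G₁, G₂, hF₁equiv, hF₂equiv]
  have hjoint : P.map (fun ω => (G₁ ω, G₂ ω)) = u.prod u := by
    rw [← PMF.toMeasure_uniformOfFintype_prod]
    refine PMF.map_eq_uniformOfFintype_of_map_mul_left_eq (fun g => ?_) (fun g => ?_)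
    · rw [htranslate g]
      exact (hF₁.prodMk hF₂).comp (hmove g)
    · rw [htranslate g, ← Measure.map_map (hF₁.prodMk hF₂) (hmove g),
        hindep.map_prodMk_comp_left hX hY (hsmul g) (hinvX g),
        Measure.map_map (hF₁.prodMk hF₂) hXY]
      rfl
  have hlaw₁ : P.map G₁ = u := by
    rw [← Measure.fst_map_prodMk hG₂, hjoint, Measure.fst_prod]
  have hlaw₂ : P.map G₂ = u := by
    rw [← Measure.snd_map_prodMk hG₁, hjoint, Measure.snd_prod]
  refine ⟨?_, hlaw₁, hlaw₂⟩
  rw [indepFun_iff_map_prod_eq_prod_map_map hG₁.aemeasurable hG₂.aemeasurable, hlaw₁, hlaw₂]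
  exact hjoint
end

section
/- Let G, U ∈ ℝ^{h×d}, D ∈ ℝ^{d×h}, let σ : ℝ → ℝ be applied entrywise, and for a row vector u ∈ ℝ^{1×d} define MLP(u; G, U, D) = [σ(uGᵀ) ⊙ (uUᵀ)] Dᵀ, where ⊙ denotes the entrywise (Hadamard) product. Let R ∈ ℝ^{d×d} be orthogonal, let γ, γ' ∈ ℝ^d have all entries nonzero, and let c ≠ 0 be a scalar. Define u' = u · diag(γ)⁻¹ R diag(γ'), G' = G · diag(γ) R diag(γ')⁻¹, U' = c · U · diag(γ) R diag(γ')⁻¹, and D' = (1/c) · Rᵀ D. Then MLP(u'; G', U', D') = MLP(u; G, U, D) · R. -/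
open Matrix

/-!
The gate and up projections only ever see the input through the products `u Gᵀ` and `u Uᵀ`.
Transforming the input by `P = diag(γ)⁻¹ R diag(γ')` and the weights by
`Q = diag(γ) R diag(γ')⁻¹` leaves these products unchanged because `P Qᵀ = 1`, which is where
orthogonality `R Rᵀ = 1` enters. The factor `c` on the up projection passes through the Hadamard
product and is cancelled by `c⁻¹` on the down projection, and `(Rᵀ D)ᵀ = Dᵀ R` puts the
rotation on the output.
-/

section

variable {l m n o : Type*}

def gluMLP {α : Type*} [CommRing α] [Fintype m] [Fintype n] (σ : α → α) (v : Matrix l n α)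
    (G U : Matrix m n α) (D : Matrix o m α) : Matrix l o α :=
  hadamard ((v * Gᵀ).map σ) (v * Uᵀ) * Dᵀ

theorem mul_mul_transpose_mul_of_mul_transpose_eq_one {α : Type*} [CommRing α] [Fintype n]
    [DecidableEq n] {P Q : Matrix n n α} (hPQ : P * Qᵀ = 1) (v : Matrix l n α)
    (A : Matrix m n α) :
    v * P * (A * Q)ᵀ = v * Aᵀ := by
  rw [transpose_mul, Matrix.mul_assoc, ← Matrix.mul_assoc P, hPQ, Matrix.one_mul]

theorem gluMLP_mul_of_mul_transpose_eq_one {α : Type*} [CommRing α] [Fintype m] [Fintype n]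
    [DecidableEq n] (σ : α → α) {P Q : Matrix n n α} (hPQ : P * Qᵀ = 1) (v : Matrix l n α)
    (G U : Matrix m n α) (D : Matrix o m α) :
    gluMLP σ (v * P) (G * Q) (U * Q) D = gluMLP σ v G U D := by
  simp only [gluMLP, mul_mul_transpose_mul_of_mul_transpose_eq_one hPQ]

theorem gluMLP_smul_inv_smul {K : Type*} [Field K] [Fintype m] [Fintype n] (σ : K → K)
    (v : Matrix l n K) (G U : Matrix m n K) (D : Matrix o m K) {c : K} (hc : c ≠ 0) :
    gluMLP σ v G (c • U) (c⁻¹ • D) = gluMLP σ v G U D := by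
  simp only [gluMLP, transpose_smul, Matrix.mul_smul, hadamard_smul, Matrix.smul_mul,
    smul_smul, inv_mul_cancel₀ hc, one_smul]

theorem gluMLP_mul_left_down {α : Type*} [CommRing α] [Fintype m] [Fintype n] [Fintype o]
    (σ : α → α) (v : Matrix l n α) (G U : Matrix m n α) (S : Matrix o o α)
    (D : Matrix o m α) :
    gluMLP σ v G U (S * D) = gluMLP σ v G U D * Sᵀ := by
  simp only [gluMLP, transpose_mul, Matrix.mul_assoc]

theorem isUnit_det_diagonal {K : Type*} [Field K] [Fintype n] [DecidableEq n] {γ : n → K}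
    (hγ : ∀ i, γ i ≠ 0) : IsUnit (diagonal γ).det :=
  (isUnit_iff_isUnit_det _).mp (isUnit_diagonal.mpr (Pi.isUnit_iff.mpr fun i => (hγ i).isUnit))

theorem diagonal_inv_mul_mul_diagonal_mul_transpose_eq_one {K : Type*} [Field K] [Fintype n]
    [DecidableEq n] {R : Matrix n n K} (hR : R * Rᵀ = 1) {γ γ' : n → K}
    (hγ : ∀ i, γ i ≠ 0) (hγ' : ∀ i, γ' i ≠ 0) :
    (diagonal γ)⁻¹ * R * diagonal γ' * (diagonal γ * R * (diagonal γ')⁻¹)ᵀ = 1 := by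
  have hdiag' : diagonal γ' * ((diagonal γ')⁻¹)ᵀ = 1 := by
    rw [transpose_nonsing_inv, diagonal_transpose, mul_nonsing_inv _ (isUnit_det_diagonal hγ')]
  calc (diagonal γ)⁻¹ * R * diagonal γ' * (diagonal γ * R * (diagonal γ')⁻¹)ᵀ
    _ = (diagonal γ)⁻¹ * (R * (diagonal γ' * ((diagonal γ')⁻¹)ᵀ) * Rᵀ) * diagonal γ := by
        simp only [transpose_mul, diagonal_transpose, Matrix.mul_assoc]
    _ = 1 := by
        rw [hdiag', Matrix.mul_one, hR, Matrix.mul_one, nonsing_inv_mul _ (isUnit_det_diagonal hγ)]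

end

/-- MLP step of the output-preserving rotation (Theorem 5 / Appendix F): rotating the input
by `diag(γ)⁻¹ R diag(γ')`, the gate/up projections by `diag(γ) R diag(γ')⁻¹` (the up
projection also scaled by `c`), and the down projection by `(1/c) Rᵀ` rotates the GLU MLP
output exactly by `R`. -/
theorem stmt_10 {h d : ℕ} (G U : Matrix (Fin h) (Fin d) ℝ) (D : Matrix (Fin d) (Fin h) ℝ)
    (σ : ℝ → ℝ) (u : Matrix (Fin 1) (Fin d) ℝ)
    (R : Matrix (Fin d) (Fin d) ℝ) (hR : R * Rᵀ = 1 ∧ Rᵀ * R = 1)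
    (γ γ' : Fin d → ℝ) (hγ : ∀ i, γ i ≠ 0) (hγ' : ∀ i, γ' i ≠ 0)
    (c : ℝ) (hc : c ≠ 0)
    (MLP : Matrix (Fin 1) (Fin d) ℝ → Matrix (Fin h) (Fin d) ℝ →
      Matrix (Fin h) (Fin d) ℝ → Matrix (Fin d) (Fin h) ℝ → Matrix (Fin 1) (Fin d) ℝ)
    (hMLP : MLP = fun v Gm Um Dm =>
      (Matrix.hadamard ((v * Gmᵀ).map σ) (v * Umᵀ)) * Dmᵀ) :
    MLP (u * (Matrix.diagonal γ)⁻¹ * R * Matrix.diagonal γ')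
        (G * Matrix.diagonal γ * R * (Matrix.diagonal γ')⁻¹)
        (c • (U * Matrix.diagonal γ * R * (Matrix.diagonal γ')⁻¹))
        (c⁻¹ • (Rᵀ * D))
      = MLP u G U D * R := by
  obtain rfl : MLP = gluMLP σ := hMLP
  have hPQ := diagonal_inv_mul_mul_diagonal_mul_transpose_eq_one hR.1 hγ hγ'
  rw [gluMLP_smul_inv_smul σ _ _ _ _ hc, gluMLP_mul_left_down, transpose_transpose]
  congr 1
  simpa only [Matrix.mul_assoc] using gluMLP_mul_of_mul_transpose_eq_one σ hPQ u G U D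
end
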